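/- Let Γ = ⟨α_1, …, α_k⟩ ⊂ ℕ^d be an affine semigroup, 𝕂 a field, and let G be a reduced Gröbner basis of the defining ideal I_{Γ_H} ⊂ 𝕂[t, y_1, …, y_k] of Γ_H with respect to a lexicographic monomial order in which t is greater than every y_i. Then Δ(Γ) = { j ≥ 1 : G contains an element of the form t^j y^z − y^w for some z, w ∈ ℕ^k }. -/

import Mathlib

open Finset

/-- The factorization homomorphism `φ_Γ : ℕ^k → ℕ^d` determined by the
generators `α 1, …, α k`. -/
def phi {d k : ℕ} (α : Fin k → Fin d → ℕ) (z : Fin k → ℕ) : Fin d → ℕ :=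
  ∑ i, z i • α i

/-- The length `|z|` of a factorization. -/
def len {k : ℕ} (z : Fin k → ℕ) : ℕ := ∑ i, z i

/-- The length set `L_Γ(γ)`. -/
def lengthSet {d k : ℕ} (α : Fin k → Fin d → ℕ) (γ : Fin d → ℕ) : Set ℕ :=
  len '' {z | phi α z = γ}

/-- The set of successive differences (gaps) of a set of naturals. -/
def deltaOf (L : Set ℕ) : Set ℕ :=
  {δ | 0 < δ ∧ ∃ a, a ∈ L ∧ a + δ ∈ L ∧ ∀ c ∈ L, ¬(a < c ∧ c < a + δ)}

/-- The delta set `Δ(Γ)` of the affine semigroup generated by `α`. -/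
def deltaSet {d k : ℕ} (α : Fin k → Fin d → ℕ) : Set ℕ :=
  ⋃ γ ∈ Set.range (phi α), deltaOf (lengthSet α γ)

/-- The monomial `y^z = y_1^{z_1} ⋯ y_k^{z_k}` in `𝕂[y_1,…,y_k]`. -/
noncomputable def monoY (𝕂 : Type*) [CommSemiring 𝕂] {k : ℕ} (z : Fin k → ℕ) :
    MvPolynomial (Fin k) 𝕂 :=
  MvPolynomial.monomial (Finsupp.equivFunOnFinite.symm z) 1

/-- The ideal `I_j = ⟨y^z − y^w : φ_Γ(z) = φ_Γ(w), ||z|−|w|| ≤ j⟩`. -/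
noncomputable def idealI (𝕂 : Type*) [Field 𝕂] {d k : ℕ} (α : Fin k → Fin d → ℕ)
    (j : ℕ) : Ideal (MvPolynomial (Fin k) 𝕂) :=
  Ideal.span {f | ∃ z w : Fin k → ℕ, phi α z = phi α w ∧
    Nat.dist (len z) (len w) ≤ j ∧ f = monoY 𝕂 z - monoY 𝕂 w}

/-! We work in `𝕂[t, y_1, …, y_k] = MvPolynomial (Fin (k+1)) 𝕂`, where the
variable indexed by `0` is `t` and the variable indexed by `i+1` is `y_i`.
The lexicographic order on exponent vectors `Fin (k+1) →₀ ℕ` (via `Finsupp.Lex`,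
comparing the exponent of `t` first) is then a lexicographic monomial order in
which `t` is greater than every `y_i`. -/

/-- The exponent vector of the monomial `t^i y^z`. -/
noncomputable def expTY {k : ℕ} (i : ℕ) (z : Fin k → ℕ) : Fin (k + 1) →₀ ℕ :=
  Finsupp.equivFunOnFinite.symm (Fin.cons i z)

/-- The monomial `t^i y^z` in `𝕂[t, y_1, …, y_k]`. -/
noncomputable def monoT (𝕂 : Type*) [CommSemiring 𝕂] {k : ℕ} (i : ℕ) (z : Fin k → ℕ) :
    MvPolynomial (Fin (k + 1)) 𝕂 :=
  MvPolynomial.monomial (expTY i z) 1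

/-- The leading (initial) exponent of `f` with respect to the lexicographic
order with `t` greatest. -/
noncomputable def leadExp {𝕂 : Type*} [CommSemiring 𝕂] {k : ℕ}
    (f : MvPolynomial (Fin (k + 1)) 𝕂) : Fin (k + 1) →₀ ℕ :=
  ofLex (f.support.sup toLex)

/-- The initial term of `f` with respect to the lexicographic order with `t`
greatest. -/
noncomputable def initTerm {𝕂 : Type*} [CommSemiring 𝕂] {k : ℕ}
    (f : MvPolynomial (Fin (k + 1)) 𝕂) : MvPolynomial (Fin (k + 1)) 𝕂 :=
  MvPolynomial.monomial (leadExp f) (MvPolynomial.coeff (leadExp f) f)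

/-- `G` is a Gröbner basis of `I` (w.r.t. the lex order with `t` greatest):
`G` generates `I` and the initial terms of elements of `G` generate the ideal
generated by the initial terms of all nonzero elements of `I`. -/
def IsGroebnerBasis {𝕂 : Type*} [Field 𝕂] {k : ℕ}
    (I : Ideal (MvPolynomial (Fin (k + 1)) 𝕂))
    (G : Set (MvPolynomial (Fin (k + 1)) 𝕂)) : Prop :=
  G ⊆ (I : Set (MvPolynomial (Fin (k + 1)) 𝕂)) ∧ Ideal.span G = I ∧
    Ideal.span (initTerm '' G) = Ideal.span (initTerm '' {f | f ∈ I ∧ f ≠ 0})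

/-- `G` is reduced: every element is monic and no monomial occurring in an
element of `G` is divisible by the initial monomial of a different element. -/
def IsReducedGB {𝕂 : Type*} [Field 𝕂] {k : ℕ}
    (G : Set (MvPolynomial (Fin (k + 1)) 𝕂)) : Prop :=
  (∀ g ∈ G, MvPolynomial.coeff (leadExp g) g = 1) ∧
    ∀ g ∈ G, ∀ g' ∈ G, g' ≠ g → ∀ m ∈ g.support, ¬ leadExp g' ≤ m

/-- The defining ideal `I_{Γ_H}` of
`Γ_H = ⟨(1,0), (1,α_1), …, (1,α_k)⟩ ⊂ ℕ^{1+d}`, namely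
`⟨t^{|w|−|z|} y^z − y^w : φ_Γ(z) = φ_Γ(w), |z| ≤ |w|⟩`. -/
noncomputable def idealGH (𝕂 : Type*) [Field 𝕂] {d k : ℕ}
    (α : Fin k → Fin d → ℕ) : Ideal (MvPolynomial (Fin (k + 1)) 𝕂) :=
  Ideal.span {f | ∃ z w : Fin k → ℕ, phi α z = phi α w ∧ len z ≤ len w ∧
    f = monoT 𝕂 (len w - len z) z - monoT 𝕂 0 w}

/-! The proof rests on the `Γ_H`-grading of `𝕂[t, y]`, `deg (t^i y^z) = (i + |z|, φ_Γ(z))`. The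
monomial map to `𝕂[Γ_H]` kills `I_{Γ_H}`, so each monomial of an element of the ideal has a
partner of the same degree, while a difference of two monomials of equal degree lies in the
ideal. Reducedness then forces each `g ∈ G` to be a binomial `t^j y^z - y^w` with
`φ_Γ(z) = φ_Γ(w)` and `|w| = |z| + j`.

If `t^δ y^z - y^w ∈ G`, a factorization of `φ_Γ(z)` of length strictly between `|z|` and
`|z| + δ` would give an element of the ideal whose leading monomial properly divides `t^δ y^z`,
which a reduced basis forbids; so `δ` is a gap. Conversely, for a gap `δ` between lengths `a`
and `a + δ` of `γ`, let `z` be the lex-smallest factorization of length `a` and `w` one of length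
`a + δ`. Some `t^j y^{z'} - y^{w'} ∈ G` has leading monomial dividing `t^δ y^z`; replacing `z'`
by `w'` inside `z` gives a factorization of `γ` of length `a + j`, lex-smaller than `z` if
`j = 0`, so `0 < j ≤ δ`, and the gap forces `j = δ`. -/

open MvPolynomial

section ExpTY

variable {k : ℕ}

@[simp] lemma expTY_apply_zero (i : ℕ) (z : Fin k → ℕ) : expTY i z 0 = i := by
  simp [expTY]

@[simp] lemma expTY_apply_succ (i : ℕ) (z : Fin k → ℕ) (l : Fin k) :
    expTY i z l.succ = z l := by
  simp [expTY]

lemma exists_expTY_eq (e : Fin (k + 1) →₀ ℕ) : ∃ i z, expTY i z = e :=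
  ⟨e 0, fun l => e l.succ, by ext a; induction a using Fin.cases <;> simp⟩

lemma expTY_add (a b : ℕ) (z w : Fin k → ℕ) :
    expTY a z + expTY b w = expTY (a + b) (z + w) := by
  ext x
  induction x using Fin.cases <;> simp

lemma expTY_le_expTY_iff {a b : ℕ} {z w : Fin k → ℕ} :
    expTY a z ≤ expTY b w ↔ a ≤ b ∧ z ≤ w := by
  rw [Finsupp.le_def, Fin.forall_fin_succ, Pi.le_def]
  simp

lemma toLex_lt_toLex_of_apply_zero_lt {e e' : Fin (k + 1) →₀ ℕ} (h : e 0 < e' 0) :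
    toLex e < toLex e' :=
  Finsupp.Lex.lt_iff.mpr ⟨0, fun j hj => absurd hj (Fin.zero_le j).not_gt, h⟩

lemma apply_zero_le_of_toLex_lt {e e' : Fin (k + 1) →₀ ℕ} (h : toLex e < toLex e') :
    e 0 ≤ e' 0 :=
  not_lt.mp fun h' => (toLex_lt_toLex_of_apply_zero_lt h').asymm h

end ExpTY

lemma phi_add {d k : ℕ} (α : Fin k → Fin d → ℕ) (u v : Fin k → ℕ) :
    phi α (u + v) = phi α u + phi α v := by
  simp [phi, add_smul, Finset.sum_add_distrib]

lemma len_add {k : ℕ} (u v : Fin k → ℕ) : len (u + v) = len u + len v := by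
  simp [len, Finset.sum_add_distrib]

section Toric

variable {𝕂 : Type*} [Field 𝕂] {d k : ℕ}

noncomputable def degH (α : Fin k → Fin d → ℕ) : (Fin (k + 1) →₀ ℕ) →+ ℕ × (Fin d → ℕ) :=
  (Finsupp.linearCombination ℕ (Fin.cons (1, 0) fun l => (1, α l))).toAddMonoidHom

lemma degH_expTY (α : Fin k → Fin d → ℕ) (i : ℕ) (z : Fin k → ℕ) :
    degH α (expTY i z) = (i + len z, phi α z) := by
  simp only [degH, LinearMap.toAddMonoidHom_coe, Finsupp.linearCombination_apply]
  rw [Finsupp.sum_fintype _ _ (by simp), Fin.sum_univ_succ]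
  ext <;> simp [len, phi, Prod.fst_sum, Prod.snd_sum]

/-- The monomial map `𝕂[t, y] → 𝕂[Γ_H]`, whose kernel is `I_{Γ_H}`. -/
noncomputable def toricHom (R : Type*) [CommSemiring R] (α : Fin k → Fin d → ℕ) :
    MvPolynomial (Fin (k + 1)) R →+* AddMonoidAlgebra R (ℕ × (Fin d → ℕ)) :=
  AddMonoidAlgebra.mapDomainRingHom R (degH α)

lemma toricHom_monomial {R : Type*} [CommSemiring R] (α : Fin k → Fin d → ℕ)
    (e : Fin (k + 1) →₀ ℕ) (c : R) :
    toricHom R α (monomial e c) = AddMonoidAlgebra.single (degH α e) c :=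
  AddMonoidAlgebra.mapDomain_single

lemma idealGH_le_ker_toricHom (α : Fin k → Fin d → ℕ) :
    idealGH 𝕂 α ≤ RingHom.ker (toricHom 𝕂 α) := by
  rw [idealGH, Ideal.span_le]
  rintro f ⟨z, w, hphi, hlen, rfl⟩
  simp only [SetLike.mem_coe, RingHom.mem_ker, map_sub, monoT, toricHom_monomial, degH_expTY]
  rw [Nat.sub_add_cancel hlen, zero_add, hphi, sub_self]

lemma exists_mem_support_degH_eq {α : Fin k → Fin d → ℕ} {f : MvPolynomial (Fin (k + 1)) 𝕂}
    (hf : f ∈ idealGH 𝕂 α) {e : Fin (k + 1) →₀ ℕ} (he : e ∈ f.support) :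
    ∃ e' ∈ f.support, e' ≠ e ∧ degH α e' = degH α e := by
  classical
  by_contra! hcon
  have hfiber : {e' ∈ f.support | degH α e' = degH α e} = {e} := by
    ext x
    simp only [Finset.mem_filter, Finset.mem_singleton]
    exact ⟨fun ⟨hx, hdeg⟩ => by_contra fun hxe => hcon x hx hxe hdeg, by rintro rfl; exact ⟨he, rfl⟩⟩
  have hcoeff : (toricHom 𝕂 α f).coeff (degH α e) =
      ∑ e' ∈ f.support with degH α e' = degH α e, coeff e' f :=
    Finsupp.mapDomain_apply_eq_sum _ _
  rw [hfiber, Finset.sum_singleton, RingHom.mem_ker.mp (idealGH_le_ker_toricHom α hf)] at hcoeff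
  exact mem_support_iff.mp he hcoeff.symm

end Toric

section LeadingTerm

variable {R : Type*} [CommRing R] {k : ℕ}

lemma leadExp_mem_support {f : MvPolynomial (Fin (k + 1)) R} (hf : f ≠ 0) :
    leadExp f ∈ f.support := by
  obtain ⟨a, ha, hsup⟩ := f.support.exists_mem_eq_sup (support_nonempty.mpr hf) toLex
  rw [leadExp, hsup]
  exact ha

lemma toLex_le_toLex_leadExp {f : MvPolynomial (Fin (k + 1)) R} {m : Fin (k + 1) →₀ ℕ}
    (hm : m ∈ f.support) : toLex m ≤ toLex (leadExp f) :=
  Finset.le_sup (f := toLex) hm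

lemma leadExp_eq_of_coeff_ne_zero {f : MvPolynomial (Fin (k + 1)) R} {a : Fin (k + 1) →₀ ℕ}
    (ha : coeff a f ≠ 0) (hmax : ∀ m ∈ f.support, toLex m ≤ toLex a) : leadExp f = a := by
  have hf : f ≠ 0 := by rintro rfl; exact ha (coeff_zero a)
  exact toLex.injective <| le_antisymm (hmax _ (leadExp_mem_support hf))
    (toLex_le_toLex_leadExp (mem_support_iff.mpr ha))

lemma support_monomial_sub_monomial [Nontrivial R] {a b : Fin (k + 1) →₀ ℕ} (hab : a ≠ b) :
    (monomial a (1 : R) - monomial b 1).support = {a, b} := by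
  classical
  ext x
  simp only [mem_support_iff, coeff_sub, coeff_monomial, Finset.mem_insert, Finset.mem_singleton]
  by_cases hxa : a = x <;> by_cases hxb : b = x <;> simp_all [eq_comm]

lemma leadExp_monomial_sub_monomial [Nontrivial R] {a b : Fin (k + 1) →₀ ℕ} (h : toLex b < toLex a) :
    leadExp (monomial a (1 : R) - monomial b 1) = a := by
  have hab : a ≠ b := fun hab => h.ne (congrArg toLex hab).symm
  refine leadExp_eq_of_coeff_ne_zero ?_ fun m hm => ?_
  · simp [coeff_monomial, hab.symm]
  · rw [support_monomial_sub_monomial hab, Finset.mem_insert, Finset.mem_singleton] at hm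
    rcases hm with rfl | rfl
    exacts [le_rfl, h.le]

lemma monomial_sub_monomial_ne_zero [Nontrivial R] {a b : Fin (k + 1) →₀ ℕ} (hab : a ≠ b) :
    monomial a (1 : R) - monomial b 1 ≠ 0 :=
  sub_ne_zero.mpr ((monomial_left_injective one_ne_zero).ne hab)

end LeadingTerm

section Groebner

variable {𝕂 : Type*} [Field 𝕂] {k : ℕ}
variable {I : Ideal (MvPolynomial (Fin (k + 1)) 𝕂)} {G : Set (MvPolynomial (Fin (k + 1)) 𝕂)}

lemma IsGroebnerBasis.exists_leadExp_le (hGB : IsGroebnerBasis I G)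
    (hmonic : ∀ g ∈ G, coeff (leadExp g) g = 1) {f : MvPolynomial (Fin (k + 1)) 𝕂}
    (hfI : f ∈ I) (hf : f ≠ 0) : ∃ g ∈ G, leadExp g ≤ leadExp f := by
  have hinit : initTerm f ∈ Ideal.span ((fun e => monomial e (1 : 𝕂)) '' (leadExp '' G)) := by
    have himg : initTerm '' G = (fun e => monomial e (1 : 𝕂)) '' (leadExp '' G) := by
      rw [Set.image_image]
      exact Set.image_congr fun g hg => by rw [initTerm, hmonic g hg]
    rw [← himg, hGB.2.2]
    exact Ideal.subset_span ⟨f, ⟨hfI, hf⟩, rfl⟩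
  have hlead : leadExp f ∈ (initTerm f).support := by
    rw [mem_support_iff, initTerm, coeff_monomial, if_pos rfl]
    exact mem_support_iff.mp (leadExp_mem_support hf)
  obtain ⟨_, ⟨g, hg, rfl⟩, hle⟩ := mem_ideal_span_monomial_image.mp hinit _ hlead
  exact ⟨g, hg, hle⟩

lemma IsReducedGB.leadExp_le (hGB : IsGroebnerBasis I G) (hred : IsReducedGB G)
    {g : MvPolynomial (Fin (k + 1)) 𝕂} (hg : g ∈ G) {m : Fin (k + 1) →₀ ℕ} (hm : m ∈ g.support)
    {f : MvPolynomial (Fin (k + 1)) 𝕂} (hfI : f ∈ I) (hf : f ≠ 0) (hfm : leadExp f ≤ m) :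
    leadExp g ≤ leadExp f := by
  obtain ⟨g', hg', hle⟩ := hGB.exists_leadExp_le hred.1 hfI hf
  obtain rfl : g' = g := by_contra fun hne => hred.2 g hg g' hg' hne m hm (hle.trans hfm)
  exact hle

lemma IsReducedGB.eq_of_coeff_leadExp_eq_one (hGB : IsGroebnerBasis I G) (hred : IsReducedGB G)
    {g f : MvPolynomial (Fin (k + 1)) 𝕂} (hg : g ∈ G) (hfI : f ∈ I)
    (hmonic : coeff (leadExp g) f = 1)
    (hsupp : f.support ⊆ g.support) : g = f := by
  classical
  by_contra hne
  have hh : g - f ≠ 0 := sub_ne_zero.mpr hne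
  have hsub : (g - f).support ⊆ g.support :=
    (support_sub _ g f).trans (Finset.union_subset le_rfl hsupp)
  have hmem := hsub (leadExp_mem_support hh)
  have hle := hred.leadExp_le hGB hg hmem (Ideal.sub_mem _ (hGB.1 hg) hfI) hh le_rfl
  have heq : leadExp (g - f) = leadExp g :=
    toLex.injective <| le_antisymm (toLex_le_toLex_leadExp hmem) (Finsupp.toLex_monotone hle)
  have hzero : coeff (leadExp g) (g - f) = 0 := by rw [coeff_sub, hred.1 g hg, hmonic, sub_self]
  exact mem_support_iff.mp (heq ▸ leadExp_mem_support hh) hzero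

end Groebner

section ReducedBasis

variable {𝕂 : Type*} [Field 𝕂] {d k : ℕ} {α : Fin k → Fin d → ℕ}

lemma monoT_mul_monoT (i j : ℕ) (z w : Fin k → ℕ) :
    monoT 𝕂 i z * monoT 𝕂 j w = monoT 𝕂 (i + j) (z + w) := by
  rw [monoT, monoT, monomial_mul, expTY_add, mul_one, monoT]

lemma monoT_sub_monoT_mem_idealGH_of_le {i i' : ℕ} {z w : Fin k → ℕ} (hi : i' ≤ i)
    (hlen : i + len z = i' + len w) (hphi : phi α z = phi α w) :
    monoT 𝕂 i z - monoT 𝕂 i' w ∈ idealGH 𝕂 α := by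
  have hgen : monoT 𝕂 (len w - len z) z - monoT 𝕂 0 w ∈ idealGH 𝕂 α :=
    Ideal.subset_span ⟨z, w, hphi, by omega, rfl⟩
  convert Ideal.mul_mem_left _ (monoT 𝕂 i' 0) hgen using 1
  rw [mul_sub, monoT_mul_monoT, monoT_mul_monoT, show i' + (len w - len z) = i by omega]
  simp only [zero_add, add_zero]

lemma monomial_sub_monomial_mem_idealGH {a b : Fin (k + 1) →₀ ℕ} (h : degH α a = degH α b) :
    monomial a (1 : 𝕂) - monomial b 1 ∈ idealGH 𝕂 α := by
  obtain ⟨i, z, rfl⟩ := exists_expTY_eq a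
  obtain ⟨i', w, rfl⟩ := exists_expTY_eq b
  rw [degH_expTY, degH_expTY, Prod.mk.injEq] at h
  rcases le_total i' i with hi | hi
  · exact monoT_sub_monoT_mem_idealGH_of_le hi h.1 h.2
  · rw [← neg_sub]
    exact neg_mem (monoT_sub_monoT_mem_idealGH_of_le hi h.1.symm h.2.symm)

lemma monoT_sub_monoT_mem_idealGH_iff {j : ℕ} {z w : Fin k → ℕ} (hne : expTY j z ≠ expTY 0 w) :
    monoT 𝕂 j z - monoT 𝕂 0 w ∈ idealGH 𝕂 α ↔ j + len z = len w ∧ phi α z = phi α w := by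
  constructor
  · intro hmem
    have hsupp := support_monomial_sub_monomial (R := 𝕂) hne
    obtain ⟨e', he', hne', hdeg⟩ :=
      exists_mem_support_degH_eq hmem (hsupp ▸ Finset.mem_insert_self _ _)
    rw [monoT, monoT, hsupp, Finset.mem_insert, Finset.mem_singleton, or_iff_right hne'] at he'
    rw [he', degH_expTY, degH_expTY, Prod.mk.injEq] at hdeg
    exact ⟨by omega, hdeg.2.symm⟩
  · rintro ⟨hlen, hphi⟩
    exact monoT_sub_monoT_mem_idealGH_of_le (Nat.zero_le j) (by omega) hphi

lemma leadExp_monoT_sub_monoT {i j : ℕ} {z w : Fin k → ℕ}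
    (h : toLex (expTY i w) < toLex (expTY j z)) :
    leadExp (monoT 𝕂 j z - monoT 𝕂 i w) = expTY j z :=
  leadExp_monomial_sub_monomial h

variable {G : Set (MvPolynomial (Fin (k + 1)) 𝕂)}

lemma IsReducedGB.exists_eq_monoT_sub_monoT (hGB : IsGroebnerBasis (idealGH 𝕂 α) G)
    (hred : IsReducedGB G) {g : MvPolynomial (Fin (k + 1)) 𝕂} (hg : g ∈ G) :
    ∃ j z w, g = monoT 𝕂 j z - monoT 𝕂 0 w ∧ toLex (expTY 0 w) < toLex (expTY j z) := by
  have hg0 : g ≠ 0 := fun h => by simpa [h] using hred.1 g hg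
  have hlead := leadExp_mem_support hg0
  obtain ⟨e', he', hne, hdeg⟩ := exists_mem_support_degH_eq (hGB.1 hg) hlead
  have hlt : toLex e' < toLex (leadExp g) :=
    (toLex_le_toLex_leadExp he').lt_of_ne (toLex.injective.ne hne)
  have hbin : g = monomial (leadExp g) 1 - monomial e' 1 := by
    refine hred.eq_of_coeff_leadExp_eq_one hGB hg (monomial_sub_monomial_mem_idealGH hdeg.symm)
      (by simp [coeff_monomial, hne]) ?_
    rw [support_monomial_sub_monomial hne.symm]
    exact Finset.insert_subset hlead (Finset.singleton_subset_iff.mpr he')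
  obtain ⟨i, z, he⟩ := exists_expTY_eq (leadExp g)
  obtain ⟨i', w, rfl⟩ := exists_expTY_eq e'
  rw [← he] at hlt hdeg hbin
  rw [degH_expTY, degH_expTY, Prod.mk.injEq] at hdeg
  have hi : i' ≤ i := by simpa using apply_zero_le_of_toLex_lt hlt
  -- dividing out the common power of `t` would give an element of the ideal whose leading
  -- monomial strictly divides that of `g`
  obtain rfl : i' = 0 := by
    by_contra hi'
    have hflt : toLex (expTY 0 w) < toLex (expTY (i - i') z) := by
      have hsplit : expTY i z = expTY (i - i') z + expTY i' 0 := by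
        rw [expTY_add, Nat.sub_add_cancel hi, add_zero]
      have hsplit' : expTY i' w = expTY 0 w + expTY i' 0 := by rw [expTY_add, zero_add, add_zero]
      rw [hsplit, hsplit', toLex_add, toLex_add] at hlt
      exact lt_of_add_lt_add_right hlt
    have hfI : monoT 𝕂 (i - i') z - monoT 𝕂 0 w ∈ idealGH 𝕂 α :=
      monoT_sub_monoT_mem_idealGH_of_le (Nat.zero_le _) (by omega) hdeg.2.symm
    have hf0 := monomial_sub_monomial_ne_zero (R := 𝕂) fun h => hflt.ne' (congrArg toLex h)
    have hle := hred.leadExp_le hGB hg hlead hfI hf0 (by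
      rw [leadExp_monoT_sub_monoT hflt, ← he, expTY_le_expTY_iff]
      exact ⟨Nat.sub_le i i', le_rfl⟩)
    rw [leadExp_monoT_sub_monoT hflt, ← he, expTY_le_expTY_iff] at hle
    omega
  exact ⟨i, z, w, hbin, hlt⟩

end ReducedBasis

section DeltaSet

variable {𝕂 : Type*} [Field 𝕂] {d k : ℕ} {α : Fin k → Fin d → ℕ}
  {G : Set (MvPolynomial (Fin (k + 1)) 𝕂)}

lemma mem_deltaSet_of_monoT_sub_monoT_mem (hGB : IsGroebnerBasis (idealGH 𝕂 α) G)
    (hred : IsReducedGB G) {δ : ℕ} (hδ : 1 ≤ δ) {z w : Fin k → ℕ}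
    (hg : monoT 𝕂 δ z - monoT 𝕂 0 w ∈ G) : δ ∈ deltaSet α := by
  have hlt : toLex (expTY 0 w) < toLex (expTY δ z) :=
    toLex_lt_toLex_of_apply_zero_lt (by simp only [expTY_apply_zero]; omega)
  have hne : expTY δ z ≠ expTY 0 w := fun h => hlt.ne' (congrArg toLex h)
  obtain ⟨hlen, hphi⟩ := (monoT_sub_monoT_mem_idealGH_iff hne).mp (hGB.1 hg)
  rw [deltaSet, Set.mem_iUnion₂]
  refine ⟨phi α z, ⟨z, rfl⟩, hδ, len z, ⟨z, rfl, rfl⟩, ⟨w, hphi.symm, by omega⟩, ?_⟩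
  rintro _ ⟨u, hu, rfl⟩ ⟨hzu, huz⟩
  -- a length strictly between `|z|` and `|z| + δ` would give an element of the ideal whose
  -- leading monomial strictly divides `t^δ y^z`
  have hlt' : toLex (expTY 0 u) < toLex (expTY (len u - len z) z) :=
    toLex_lt_toLex_of_apply_zero_lt (by simp only [expTY_apply_zero]; omega)
  have hne' : expTY (len u - len z) z ≠ expTY 0 u := fun h => hlt'.ne' (congrArg toLex h)
  have hfI := (monoT_sub_monoT_mem_idealGH_iff (𝕂 := 𝕂) hne').mpr ⟨by omega, hu.symm⟩
  have hmem : expTY δ z ∈ (monoT 𝕂 δ z - monoT 𝕂 0 w).support := by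
    rw [monoT, monoT, support_monomial_sub_monomial hne]
    exact Finset.mem_insert_self _ _
  have hle := hred.leadExp_le hGB hg hmem hfI (monomial_sub_monomial_ne_zero hne') (by
    rw [leadExp_monoT_sub_monoT hlt', expTY_le_expTY_iff]
    exact ⟨by omega, le_rfl⟩)
  rw [leadExp_monoT_sub_monoT hlt, leadExp_monoT_sub_monoT hlt', expTY_le_expTY_iff] at hle
  omega

lemma deltaSet_subset_of_isGroebnerBasis (hGB : IsGroebnerBasis (idealGH 𝕂 α) G) (hred : IsReducedGB G) :
    deltaSet α ⊆ {j | 1 ≤ j ∧ ∃ z w : Fin k → ℕ, monoT 𝕂 j z - monoT 𝕂 0 w ∈ G} := by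
  intro δ hδ
  rw [deltaSet, Set.mem_iUnion₂] at hδ
  obtain ⟨γ, -, hpos, _, ⟨z₁, hz₁, rfl⟩, ⟨w, hw, hwlen⟩, hgap⟩ := hδ
  obtain ⟨z, ⟨hz, hzlen⟩, hmin⟩ := (InvImage.wf (fun u => toLex (expTY 0 u)) wellFounded_lt).has_min
    {u | phi α u = γ ∧ len u = len z₁} ⟨z₁, hz₁, rfl⟩
  have hlt : toLex (expTY 0 w) < toLex (expTY δ z) :=
    toLex_lt_toLex_of_apply_zero_lt (by simpa using hpos)
  have hne : expTY δ z ≠ expTY 0 w := fun h => hlt.ne' (congrArg toLex h)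
  have hfI := (monoT_sub_monoT_mem_idealGH_iff (𝕂 := 𝕂) hne).mpr ⟨by omega, hz.trans hw.symm⟩
  obtain ⟨g, hg, hle⟩ := hGB.exists_leadExp_le hred.1 hfI (monomial_sub_monomial_ne_zero hne)
  obtain ⟨j, z', w', rfl, hlt'⟩ := hred.exists_eq_monoT_sub_monoT hGB hg
  have hne' : expTY j z' ≠ expTY 0 w' := fun h => hlt'.ne' (congrArg toLex h)
  obtain ⟨hlen', hphi'⟩ := (monoT_sub_monoT_mem_idealGH_iff hne').mp (hGB.1 hg)
  rw [leadExp_monoT_sub_monoT hlt', leadExp_monoT_sub_monoT hlt, expTY_le_expTY_iff] at hle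
  -- trading the factor `y^z'` of `y^z` for `y^w'` gives a factorization of length `|z| + j`
  have hsplit : z - z' + z' = z := tsub_add_cancel_of_le hle.2
  have hu : phi α (z - z' + w') = γ := by rw [phi_add, ← hphi', ← phi_add, hsplit, hz]
  have hulen : len (z - z' + w') = len z + j := by
    have := len_add (z - z') z'
    rw [hsplit] at this
    rw [len_add]
    omega
  refine ⟨hpos, z', w', ?_⟩
  rcases Nat.eq_zero_or_pos j with rfl | hj
  · refine absurd ?_ (hmin _ ⟨hu, by omega⟩)
    show toLex (expTY 0 (z - z' + w')) < toLex (expTY 0 z)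
    calc toLex (expTY 0 (z - z' + w')) = toLex (expTY 0 (z - z')) + toLex (expTY 0 w') := by
          rw [← toLex_add, expTY_add, add_zero]
      _ < toLex (expTY 0 (z - z')) + toLex (expTY 0 z') := add_lt_add_right hlt' _
      _ = toLex (expTY 0 z) := by rw [← toLex_add, expTY_add, add_zero, hsplit]
  · obtain rfl : j = δ := by
      by_contra hjδ
      exact hgap (len z + j) ⟨_, hu, hulen⟩ ⟨by omega, by omega⟩
    exact hg

end DeltaSet

theorem stmt6_general (𝕂 : Type*) [Field 𝕂] {d k : ℕ} (α : Fin k → Fin d → ℕ)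
    (G : Set (MvPolynomial (Fin (k + 1)) 𝕂))
    (hGB : IsGroebnerBasis (idealGH 𝕂 α) G)
    (hred : IsReducedGB G) :
    deltaSet α =
      {j : ℕ | 1 ≤ j ∧ ∃ z w : Fin k → ℕ, monoT 𝕂 j z - monoT 𝕂 0 w ∈ G} :=
  (deltaSet_subset_of_isGroebnerBasis hGB hred).antisymm fun _ ⟨hδ, _, _, hg⟩ =>
    mem_deltaSet_of_monoT_sub_monoT_mem hGB hred hδ hg

/-- If `G` is a reduced Gröbner basis of `I_{Γ_H}` w.r.t. the lex order with `t`
greatest, then `Δ(Γ) = { j ≥ 1 : t^j y^z − y^w ∈ G for some z, w ∈ ℕ^k }`. -/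
theorem stmt6 (𝕂 : Type*) [Field 𝕂] {d k : ℕ} (α : Fin k → Fin d → ℕ)
    (hne : ∀ i, α i ≠ 0)
    (hmin : ∀ i, α i ∉ AddSubmonoid.closure (α '' {j | j ≠ i}))
    (G : Set (MvPolynomial (Fin (k + 1)) 𝕂))
    (hGB : IsGroebnerBasis (idealGH 𝕂 α) G)
    (hred : IsReducedGB G) :
    deltaSet α =
      {j : ℕ | 1 ≤ j ∧ ∃ z w : Fin k → ℕ, monoT 𝕂 j z - monoT 𝕂 0 w ∈ G} :=
  stmt6_general 𝕂 α G hGB hred
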